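/- arXiv:2303.17722 — 5 statements merged into one kernel-verified Lean document; each statement's English description precedes it below -/
import Mathlib

section
/- Let f₁, f₂, f₃, f₄ : ℝ → ℝ be nondecreasing right-continuous functions, set f := f₁ − f₂ + i(f₃ − f₄), and let df := μ₁ − μ₂ + i(μ₃ − μ₄), where μⱼ is the Lebesgue–Stieltjes measure of fⱼ (determined by μⱼ((a,b]) = fⱼ(b) − fⱼ(a)). Let a < b and let φ : ℝ → ℝ be continuous and piecewise continuously differentiable on [a,b] (i.e. there are finitely many points off of which φ is C¹, with φ' extending to a piecewise continuous bounded function on [a,b]). Then ∫_{(a,b]} φ d(df) + ∫_a^b φ'(x) f(x) dx = f(b)φ(b) − f(a)φ(a). -/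
open MeasureTheory

section Aux
open Set intervalIntegral

/-- FTC-2 allowing a finite exceptional set. -/
lemma ftc_finset (φ ψ : ℝ → ℝ) (S : Finset ℝ) :
    ∀ a b : ℝ, a ≤ b → ContinuousOn φ (Set.Icc a b) →
    (∀ x ∈ Set.Ioo a b \ (S : Set ℝ), HasDerivAt φ (ψ x) x) →
    IntervalIntegrable ψ volume a b →
    ∫ x in a..b, ψ x = φ b - φ a := by
  induction S using Finset.induction_on with
  | empty =>
    intro a b hab hc hd hi
    exact integral_eq_sub_of_hasDeriv_right_of_le hab hc
      (fun x hx => (hd x (by simpa using hx)).hasDerivWithinAt) hi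
  | @insert c S hcS IH =>
    intro a b hab hc hd hi
    by_cases hcab : c ∈ Set.Ioo a b
    · have h1 : ∫ x in a..c, ψ x = φ c - φ a := by
        refine IH a c hcab.1.le (hc.mono (Set.Icc_subset_Icc le_rfl hcab.2.le)) ?_
          (hi.mono_set ?_)
        · intro x hx
          refine hd x ⟨⟨hx.1.1, hx.1.2.trans hcab.2⟩, ?_⟩
          simp only [Finset.coe_insert, Set.mem_insert_iff, not_or]
          exact ⟨hx.1.2.ne, hx.2⟩
        · rw [Set.uIcc_of_le hcab.1.le, Set.uIcc_of_le hab]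
          exact Set.Icc_subset_Icc le_rfl hcab.2.le
      have h2 : ∫ x in c..b, ψ x = φ b - φ c := by
        refine IH c b hcab.2.le (hc.mono (Set.Icc_subset_Icc hcab.1.le le_rfl)) ?_
          (hi.mono_set ?_)
        · intro x hx
          refine hd x ⟨⟨hcab.1.trans hx.1.1, hx.1.2⟩, ?_⟩
          simp only [Finset.coe_insert, Set.mem_insert_iff, not_or]
          exact ⟨(hx.1.1).ne', hx.2⟩
        · rw [Set.uIcc_of_le hcab.2.le, Set.uIcc_of_le hab]
          exact Set.Icc_subset_Icc hcab.1.le le_rfl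
      have hs1 : Set.uIcc a c ⊆ Set.uIcc a b := by
        rw [Set.uIcc_of_le hcab.1.le, Set.uIcc_of_le hab]
        exact Set.Icc_subset_Icc le_rfl hcab.2.le
      have hs2 : Set.uIcc c b ⊆ Set.uIcc a b := by
        rw [Set.uIcc_of_le hcab.2.le, Set.uIcc_of_le hab]
        exact Set.Icc_subset_Icc hcab.1.le le_rfl
      have := integral_add_adjacent_intervals (hi.mono_set hs1) (hi.mono_set hs2)
      rw [← this, h1, h2]
      ring
    · refine IH a b hab hc (fun x hx => hd x ⟨hx.1, ?_⟩) hi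
      simp only [Finset.coe_insert, Set.mem_insert_iff, not_or]
      exact ⟨fun h => hcab (h ▸ hx.1), hx.2⟩


lemma real_ibp (g : ℝ → ℝ) (μ : Measure ℝ) (hg : Monotone g)
    (hμ : ∀ u v : ℝ, u ≤ v → μ (Set.Ioc u v) = ENNReal.ofReal (g v - g u))
    (a b : ℝ) (hab : a < b) (φ ψ : ℝ → ℝ)
    (hψm : Measurable ψ) (M : ℝ) (hψb : ∀ x, |ψ x| ≤ M)
    (hftc : ∀ t ∈ Set.Icc a b, ∫ x in t..b, ψ x = φ b - φ t) :
    ∫ t in Set.Ioc a b, φ t ∂μ =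
      g b * φ b - g a * φ a - ∫ x in Set.Ioc a b, ψ x * g x := by
  have hM0 : 0 ≤ M := (abs_nonneg _).trans (hψb 0)
  have hgab : 0 ≤ g b - g a := sub_nonneg.2 (hg hab.le)
  have hμfin : μ (Set.Ioc a b) ≠ ⊤ := by
    rw [hμ a b hab.le]; exact ENNReal.ofReal_ne_top
  haveI : IsFiniteMeasure (μ.restrict (Set.Ioc a b)) :=
    ⟨by rwa [Measure.restrict_apply_univ, lt_top_iff_ne_top]⟩
  haveI : IsFiniteMeasure (volume.restrict (Set.Ioc a b)) :=
    ⟨by rw [Measure.restrict_apply_univ]; exact measure_Ioc_lt_top⟩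
  -- integrability of ψ on any interval
  have hψvol : ∀ s : Set ℝ, MeasurableSet s → volume s ≠ ⊤ → IntegrableOn ψ s volume := by
    intro s hs hfin
    haveI : IsFiniteMeasure (volume.restrict s) :=
      ⟨by rwa [Measure.restrict_apply_univ, lt_top_iff_ne_top]⟩
    exact Integrable.mono' (integrable_const M) hψm.aestronglyMeasurable
      (Filter.Eventually.of_forall fun x => by simpa using hψb x)
  have hψii : ∀ u v : ℝ, IntervalIntegrable ψ volume u v := by
    intro u v
    rw [intervalIntegrable_iff]
    exact hψvol _ measurableSet_Ioc measure_Ioc_lt_top.ne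
  -- the primitive F
  set F : ℝ → ℝ := fun t => ∫ x in t..b, ψ x with hF
  have hFc : ContinuousOn F (Set.Icc a b) := by
    have := intervalIntegral.continuousOn_primitive_interval_left (f := ψ) (μ := volume)
      (a := a) (b := b)
      (by rw [Set.uIcc_of_le hab.le]
          exact (hψvol _ measurableSet_Icc measure_Icc_lt_top.ne))
    rwa [Set.uIcc_of_le hab.le] at this
  have hFbd : ∀ t ∈ Set.Icc a b, |F t| ≤ M * (b - a) := by
    intro t ht
    have h1 : ‖∫ x in t..b, ψ x‖ ≤ M * |b - t| :=
      intervalIntegral.norm_integral_le_of_norm_le_const fun x _ => by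
        rw [Real.norm_eq_abs]; exact hψb x
    rw [Real.norm_eq_abs] at h1
    have : |b - t| ≤ b - a := by
      rw [abs_of_nonneg (sub_nonneg.2 ht.2)]; linarith [ht.1]
    calc |F t| ≤ M * |b - t| := h1
      _ ≤ M * (b - a) := by apply mul_le_mul_of_nonneg_left this hM0
  have hFint : Integrable F (μ.restrict (Set.Ioc a b)) := by
    refine Integrable.mono' (integrable_const (M * (b - a)))
      ((hFc.aestronglyMeasurable measurableSet_Icc).mono_measure
        (Measure.restrict_mono Set.Ioc_subset_Icc_self le_rfl)) ?_
    filter_upwards [ae_restrict_mem measurableSet_Ioc] with t ht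
    simpa using hFbd t (Set.Ioc_subset_Icc_self ht)
  -- step 1 and 2
  have step1 : ∫ t in Set.Ioc a b, φ t ∂μ
      = φ b * (g b - g a) - ∫ t in Set.Ioc a b, F t ∂μ := by
    have e1 : ∫ t in Set.Ioc a b, φ t ∂μ = ∫ t in Set.Ioc a b, (φ b - F t) ∂μ := by
      refine setIntegral_congr_fun measurableSet_Ioc fun t ht => ?_
      have := hftc t (Set.Ioc_subset_Icc_self ht)
      simp only [hF]
      linarith [this]
    rw [e1, integral_sub (integrable_const _) hFint, setIntegral_const, measureReal_def,
      hμ a b hab.le, ENNReal.toReal_ofReal hgab, smul_eq_mul, mul_comm]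
  -- Fubini setup
  -- countable atoms
  have hatoms : (Set.Ioc a b ∩ {x : ℝ | μ {x} ≠ 0}).Countable := by
    have hcnt : Set.Countable {x : ℝ | 0 < μ ({x} ∩ Set.Ioc a b)} := by
      apply Measure.countable_meas_pos_of_disjoint_of_meas_iUnion_ne_top
        (μ := μ) (As := fun x : ℝ => {x} ∩ Set.Ioc a b)
      · exact fun i => (measurableSet_singleton i).inter measurableSet_Ioc
      · intro i j hij
        exact Set.disjoint_left.2 fun x hx hx' => hij (by
          rw [← Set.eq_of_mem_singleton hx.1, ← Set.eq_of_mem_singleton hx'.1])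
      · refine fun h => hμfin (top_le_iff.1 ?_)
        rw [← h]
        exact measure_mono (Set.iUnion_subset fun i => Set.inter_subset_right)
    refine hcnt.mono fun x hx => ?_
    obtain ⟨hx1, hx2⟩ := hx
    have : ({x} : Set ℝ) ∩ Set.Ioc a b = {x} := by
      rw [Set.inter_eq_left]; simpa using hx1
    rw [Set.mem_setOf_eq, this]
    exact pos_iff_ne_zero.2 hx2
  have hanull : volume (Set.Ioc a b ∩ {x : ℝ | μ {x} ≠ 0}) = 0 :=
    hatoms.measure_zero _
  -- measure of Ioo
  have hIoo : ∀ x ∈ Set.Ioc a b, μ {x} = 0 → μ (Set.Ioo a x) = ENNReal.ofReal (g x - g a) := by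
    intro x hx hx0
    have h1 : μ (Set.Ioc a x) = ENNReal.ofReal (g x - g a) := hμ a x hx.1.le
    have h2 : Set.Ioc a x ⊆ Set.Ioo a x ∪ {x} := by
      intro t ht
      rcases lt_or_eq_of_le ht.2 with h | h
      · exact Or.inl ⟨ht.1, h⟩
      · exact Or.inr (by simp [h])
    refine le_antisymm ?_ ?_
    · rw [← h1]; exact measure_mono Set.Ioo_subset_Ioc_self
    · calc ENNReal.ofReal (g x - g a) = μ (Set.Ioc a x) := h1.symm
        _ ≤ μ (Set.Ioo a x ∪ {x}) := measure_mono h2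
        _ ≤ μ (Set.Ioo a x) + μ {x} := measure_union_le _ _
        _ = μ (Set.Ioo a x) := by rw [hx0, add_zero]
  -- Fubini
  have hswap : ∫ t in Set.Ioc a b, F t ∂μ
      = ∫ x in Set.Ioc a b, (∫ t in Set.Ioc a b, (Set.Ioi t).indicator ψ x ∂μ) := by
    have e1 : ∫ t in Set.Ioc a b, F t ∂μ
        = ∫ t in Set.Ioc a b, (∫ x in Set.Ioc a b, (Set.Ioi t).indicator ψ x) ∂μ := by
      refine setIntegral_congr_fun measurableSet_Ioc fun t ht => ?_
      have : ∫ x in Set.Ioc a b, (Set.Ioi t).indicator ψ x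
          = ∫ x in Set.Ioc a b ∩ Set.Ioi t, ψ x := setIntegral_indicator measurableSet_Ioi
      have hset : Set.Ioc a b ∩ Set.Ioi t = Set.Ioc t b := by
        ext y
        simp only [Set.mem_inter_iff, Set.mem_Ioc, Set.mem_Ioi]
        constructor
        · rintro ⟨⟨_, h2⟩, h3⟩; exact ⟨h3, h2⟩
        · rintro ⟨h1, h2⟩; exact ⟨⟨ht.1.trans h1, h2⟩, h1⟩
      rw [this, hset]
      exact intervalIntegral.integral_of_le ht.2
    rw [e1]
    have hunc : (Function.uncurry fun t x => (Set.Ioi t).indicator ψ x)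
        = fun p : ℝ × ℝ => ({q : ℝ × ℝ | q.1 < q.2}).indicator (fun q => ψ q.2) p := by
      funext p
      simp [Function.uncurry, Set.indicator_apply, Set.mem_Ioi, Set.mem_setOf_eq]
    have hint : Integrable (Function.uncurry fun t x => (Set.Ioi t).indicator ψ x)
        ((μ.restrict (Set.Ioc a b)).prod (volume.restrict (Set.Ioc a b))) := by
      rw [hunc]
      refine Integrable.mono' (integrable_const M) ?_ ?_
      · exact (Measurable.indicator (hψm.comp measurable_snd)
          (measurableSet_lt measurable_fst measurable_snd)).aestronglyMeasurable
      · refine Filter.Eventually.of_forall fun p => ?_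
        by_cases h : p ∈ {q : ℝ × ℝ | q.1 < q.2}
        · rw [Set.indicator_of_mem h]; simpa using hψb p.2
        · rw [Set.indicator_of_notMem h]; simpa using hM0
    exact MeasureTheory.integral_integral_swap hint
  -- compute inner integral a.e.
  have hinner : ∫ x in Set.Ioc a b, (∫ t in Set.Ioc a b, (Set.Ioi t).indicator ψ x ∂μ)
      = ∫ x in Set.Ioc a b, (g x - g a) * ψ x := by
    refine setIntegral_congr_ae measurableSet_Ioc ?_
    have hae : ∀ᵐ x : ℝ, x ∉ Set.Ioc a b ∩ {x : ℝ | μ {x} ≠ 0} :=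
      measure_eq_zero_iff_ae_notMem.mp hanull
    filter_upwards [hae] with x hx hxIoc
    have hx0 : μ {x} = 0 := by
      by_contra h
      exact hx ⟨hxIoc, h⟩
    have e1 : ∀ t : ℝ, (Set.Ioi t).indicator ψ x = (Set.Iio x).indicator (fun _ => ψ x) t := by
      intro t
      simp [Set.indicator_apply, Set.mem_Ioi, Set.mem_Iio]
    have e2 : ∫ t in Set.Ioc a b, (Set.Ioi t).indicator ψ x ∂μ
        = ∫ t in Set.Ioc a b ∩ Set.Iio x, (fun _ => ψ x) t ∂μ := by
      rw [show (fun t => (Set.Ioi t).indicator ψ x)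
          = fun t => (Set.Iio x).indicator (fun _ => ψ x) t from funext e1]
      exact setIntegral_indicator measurableSet_Iio
    have hset : Set.Ioc a b ∩ Set.Iio x = Set.Ioo a x := by
      ext t
      simp only [Set.mem_inter_iff, Set.mem_Ioc, Set.mem_Iio, Set.mem_Ioo]
      constructor
      · rintro ⟨⟨h1, _⟩, h3⟩; exact ⟨h1, h3⟩
      · rintro ⟨h1, h2⟩; exact ⟨⟨h1, (le_of_lt h2).trans hxIoc.2⟩, h2⟩
    rw [e2, hset, setIntegral_const, measureReal_def, hIoo x hxIoc hx0,
      ENNReal.toReal_ofReal (sub_nonneg.2 (hg hxIoc.1.le)), smul_eq_mul]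
  -- integrability on Ioc a b of products
  have hgbd : ∀ x ∈ Set.Ioc a b, |g x| ≤ |g a| + |g b| := by
    intro x hx
    rw [abs_le]
    constructor
    · have := hg hx.1.le
      have h2 : -(|g a| + |g b|) ≤ g a := by
        have := neg_abs_le (g a)
        have := abs_nonneg (g b)
        linarith
      linarith
    · have := hg hx.2
      have h2 : g b ≤ |g a| + |g b| := by
        have := le_abs_self (g b)
        have := abs_nonneg (g a)
        linarith
      linarith
  have hψg : IntegrableOn (fun x => ψ x * g x) (Set.Ioc a b) volume := by
    refine Integrable.mono' (integrable_const (M * (|g a| + |g b|)))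
      ((hψm.mul hg.measurable).aestronglyMeasurable) ?_
    filter_upwards [ae_restrict_mem measurableSet_Ioc] with x hx
    rw [Real.norm_eq_abs, abs_mul]
    exact mul_le_mul (hψb x) (hgbd x hx) (abs_nonneg _) hM0
  have hψ1 : IntegrableOn ψ (Set.Ioc a b) volume :=
    hψvol _ measurableSet_Ioc measure_Ioc_lt_top.ne
  -- final computation
  have hsplit : ∫ x in Set.Ioc a b, (g x - g a) * ψ x
      = (∫ x in Set.Ioc a b, ψ x * g x) - g a * (φ b - φ a) := by
    have e1 : ∫ x in Set.Ioc a b, (g x - g a) * ψ x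
        = ∫ x in Set.Ioc a b, (ψ x * g x - g a * ψ x) := by
      refine setIntegral_congr_fun measurableSet_Ioc fun x _ => by ring
    have e2 : ∫ x in Set.Ioc a b, g a * ψ x = g a * ∫ x in Set.Ioc a b, ψ x :=
      integral_const_mul _ _
    have e3 : ∫ x in Set.Ioc a b, ψ x = φ b - φ a := by
      rw [← intervalIntegral.integral_of_le hab.le]
      exact hftc a ⟨le_rfl, hab.le⟩
    rw [e1, integral_sub hψg (hψ1.const_mul _), e2, e3]
  rw [step1, hswap, hinner, hsplit]
  ring

end Aux

/-- integration by parts for a complex function of locally bounded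
variation `f = f₁ - f₂ + i(f₃ - f₄)` against a continuous, piecewise `C¹`
function `φ` (Proposition 2.1). Here `μⱼ` is the Lebesgue–Stieltjes measure of
the nondecreasing right-continuous function `fⱼ`, and `ψ` is the (piecewise
continuous, bounded) derivative of `φ` off a finite exceptional set `S`. -/
theorem stieltjes_integration_by_parts
    (f₁ f₂ f₃ f₄ : ℝ → ℝ) (μ₁ μ₂ μ₃ μ₄ : Measure ℝ)
    (hm₁ : Monotone f₁) (hm₂ : Monotone f₂) (hm₃ : Monotone f₃) (hm₄ : Monotone f₄)
    (hr₁ : ∀ x, ContinuousWithinAt f₁ (Set.Ici x) x)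
    (hr₂ : ∀ x, ContinuousWithinAt f₂ (Set.Ici x) x)
    (hr₃ : ∀ x, ContinuousWithinAt f₃ (Set.Ici x) x)
    (hr₄ : ∀ x, ContinuousWithinAt f₄ (Set.Ici x) x)
    (hμ₁ : ∀ a b : ℝ, a ≤ b → μ₁ (Set.Ioc a b) = ENNReal.ofReal (f₁ b - f₁ a))
    (hμ₂ : ∀ a b : ℝ, a ≤ b → μ₂ (Set.Ioc a b) = ENNReal.ofReal (f₂ b - f₂ a))
    (hμ₃ : ∀ a b : ℝ, a ≤ b → μ₃ (Set.Ioc a b) = ENNReal.ofReal (f₃ b - f₃ a))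
    (hμ₄ : ∀ a b : ℝ, a ≤ b → μ₄ (Set.Ioc a b) = ENNReal.ofReal (f₄ b - f₄ a))
    (f : ℝ → ℂ)
    (hfdef : f = fun x => ((f₁ x - f₂ x : ℝ) : ℂ) + Complex.I * ((f₃ x - f₄ x : ℝ) : ℂ))
    (a b : ℝ) (hab : a < b)
    (φ ψ : ℝ → ℝ) (hφc : ContinuousOn φ (Set.Icc a b))
    (S : Finset ℝ)
    (hderiv : ∀ x ∈ Set.Icc a b \ (S : Set ℝ), HasDerivAt φ (ψ x) x)
    (hψc : ContinuousOn ψ (Set.Icc a b \ (S : Set ℝ)))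
    (hψb : ∃ M : ℝ, ∀ x ∈ Set.Icc a b, |ψ x| ≤ M) :
    ((((∫ x in Set.Ioc a b, φ x ∂μ₁) - ∫ x in Set.Ioc a b, φ x ∂μ₂ : ℝ) : ℂ) +
        Complex.I * (((∫ x in Set.Ioc a b, φ x ∂μ₃) - ∫ x in Set.Ioc a b, φ x ∂μ₄ : ℝ) : ℂ)) +
      (∫ x in a..b, ((ψ x : ℝ) : ℂ) * f x)
      = f b * ((φ b : ℝ) : ℂ) - f a * ((φ a : ℝ) : ℂ) := by
  classical
  obtain ⟨M, hM⟩ := hψb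
  have hM0 : 0 ≤ M := (abs_nonneg _).trans (hM a ⟨le_rfl, hab.le⟩)
  set D : Set ℝ := Set.Icc a b \ (S : Set ℝ) with hD
  have hDm : MeasurableSet D := measurableSet_Icc.diff (S.finite_toSet.measurableSet)
  set ψ' : ℝ → ℝ := D.piecewise ψ (fun _ => 0) with hψ'
  have hψ'm : Measurable ψ' := hψc.measurable_piecewise continuousOn_const hDm
  have hψ'eq : ∀ x ∈ D, ψ' x = ψ x := fun x hx => Set.piecewise_eq_of_mem _ _ _ hx
  have hψ'b : ∀ x, |ψ' x| ≤ M := by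
    intro x
    by_cases hx : x ∈ D
    · rw [hψ'eq x hx]; exact hM x hx.1
    · rw [hψ', Set.piecewise_eq_of_notMem _ _ _ hx]; simpa using hM0
  have hψ'int : ∀ u v : ℝ, IntervalIntegrable ψ' volume u v := by
    intro u v
    rw [intervalIntegrable_iff]
    haveI : IsFiniteMeasure (volume.restrict (Set.uIoc u v)) := by
      constructor
      rw [Measure.restrict_apply_univ, Set.uIoc]
      exact measure_Ioc_lt_top
    exact Integrable.mono' (integrable_const M) hψ'm.aestronglyMeasurable
      (Filter.Eventually.of_forall fun x => by simpa using hψ'b x)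
  -- FTC for ψ' from any point t of [a, b] to b
  have hftc : ∀ t ∈ Set.Icc a b, ∫ x in t..b, ψ' x = φ b - φ t := by
    intro t ht
    refine ftc_finset φ ψ' S t b ht.2 (hφc.mono (Set.Icc_subset_Icc ht.1 le_rfl)) ?_
      (hψ'int t b)
    intro x hx
    have hxD : x ∈ D := ⟨⟨ht.1.trans hx.1.1.le, hx.1.2.le⟩, hx.2⟩
    rw [hψ'eq x hxD]
    exact hderiv x hxD
  -- apply the real integration-by-parts to the four components
  have h₁ := real_ibp f₁ μ₁ hm₁ hμ₁ a b hab φ ψ' hψ'm M hψ'b hftc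
  have h₂ := real_ibp f₂ μ₂ hm₂ hμ₂ a b hab φ ψ' hψ'm M hψ'b hftc
  have h₃ := real_ibp f₃ μ₃ hm₃ hμ₃ a b hab φ ψ' hψ'm M hψ'b hftc
  have h₄ := real_ibp f₄ μ₄ hm₄ hμ₄ a b hab φ ψ' hψ'm M hψ'b hftc
  -- integrability of the products
  have hmono_bd : ∀ (g : ℝ → ℝ), Monotone g → ∀ x ∈ Set.Ioc a b, |g x| ≤ |g a| + |g b| := by
    intro g hg x hx
    rw [abs_le]
    constructor
    · have h1 := hg hx.1.le
      have h2 := neg_abs_le (g a)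
      have h3 := abs_nonneg (g b)
      linarith
    · have h1 := hg hx.2
      have h2 := le_abs_self (g b)
      have h3 := abs_nonneg (g a)
      linarith
  have hJint : ∀ (g : ℝ → ℝ), Monotone g →
      IntegrableOn (fun x => ψ' x * g x) (Set.Ioc a b) volume := by
    intro g hg
    haveI : IsFiniteMeasure (volume.restrict (Set.Ioc a b)) :=
      ⟨by rw [Measure.restrict_apply_univ]; exact measure_Ioc_lt_top⟩
    refine Integrable.mono' (integrable_const (M * (|g a| + |g b|)))
      ((hψ'm.mul hg.measurable).aestronglyMeasurable) ?_
    filter_upwards [ae_restrict_mem measurableSet_Ioc] with x hx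
    rw [Real.norm_eq_abs, abs_mul]
    exact mul_le_mul (hψ'b x) (hmono_bd g hg x hx) (abs_nonneg _) hM0
  -- the complex interval integral
  have hSnull : volume (S : Set ℝ) = 0 := S.finite_toSet.measure_zero _
  have hci : ∫ x in a..b, ((ψ x : ℝ) : ℂ) * f x
      = ((((∫ x in Set.Ioc a b, ψ' x * f₁ x) - ∫ x in Set.Ioc a b, ψ' x * f₂ x : ℝ)) : ℂ) +
        Complex.I * ((((∫ x in Set.Ioc a b, ψ' x * f₃ x) -
          ∫ x in Set.Ioc a b, ψ' x * f₄ x : ℝ)) : ℂ) := by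
    have e0 : ∫ x in a..b, ((ψ x : ℝ) : ℂ) * f x = ∫ x in a..b, ((ψ' x : ℝ) : ℂ) * f x := by
      refine intervalIntegral.integral_congr_ae ?_
      filter_upwards [measure_eq_zero_iff_ae_notMem.mp hSnull] with x hxS hxI
      rw [Set.uIoc_of_le hab.le] at hxI
      rw [hψ'eq x ⟨Set.Ioc_subset_Icc_self hxI, hxS⟩]
    have e1 : ∫ x in a..b, ((ψ' x : ℝ) : ℂ) * f x
        = ∫ x in Set.Ioc a b, ((ψ' x : ℝ) : ℂ) * f x :=
      intervalIntegral.integral_of_le hab.le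
    have e2 : ∫ x in Set.Ioc a b, ((ψ' x : ℝ) : ℂ) * f x
        = ∫ x in Set.Ioc a b,
            (((ψ' x * (f₁ x - f₂ x) : ℝ)) : ℂ) +
              Complex.I * (((ψ' x * (f₃ x - f₄ x) : ℝ)) : ℂ) := by
      refine setIntegral_congr_fun measurableSet_Ioc fun x _ => ?_
      rw [hfdef]
      push_cast
      ring
    have hint12 : IntegrableOn (fun x => ψ' x * (f₁ x - f₂ x)) (Set.Ioc a b) volume := by
      have : (fun x => ψ' x * (f₁ x - f₂ x))
          = fun x => ψ' x * f₁ x - ψ' x * f₂ x := funext fun x => mul_sub _ _ _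
      rw [this]
      exact (hJint f₁ hm₁).sub (hJint f₂ hm₂)
    have hint34 : IntegrableOn (fun x => ψ' x * (f₃ x - f₄ x)) (Set.Ioc a b) volume := by
      have : (fun x => ψ' x * (f₃ x - f₄ x))
          = fun x => ψ' x * f₃ x - ψ' x * f₄ x := funext fun x => mul_sub _ _ _
      rw [this]
      exact (hJint f₃ hm₃).sub (hJint f₄ hm₄)
    have e3 : ∫ x in Set.Ioc a b,
          ((((ψ' x * (f₁ x - f₂ x) : ℝ)) : ℂ) +
            Complex.I * (((ψ' x * (f₃ x - f₄ x) : ℝ)) : ℂ))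
        = (((∫ x in Set.Ioc a b, ψ' x * (f₁ x - f₂ x) : ℝ)) : ℂ) +
            Complex.I * (((∫ x in Set.Ioc a b, ψ' x * (f₃ x - f₄ x) : ℝ)) : ℂ) := by
      have h1' : Integrable (fun x => (((ψ' x * (f₁ x - f₂ x) : ℝ)) : ℂ))
          (volume.restrict (Set.Ioc a b)) := hint12.ofReal
      have h2' : Integrable (fun x => Complex.I * (((ψ' x * (f₃ x - f₄ x) : ℝ)) : ℂ))
          (volume.restrict (Set.Ioc a b)) := (hint34.ofReal).const_mul _
      rw [integral_add h1' h2', integral_const_mul]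
      congr 1
      · exact integral_ofReal
      · congr 1
        exact integral_ofReal
    have e4 : ∫ x in Set.Ioc a b, ψ' x * (f₁ x - f₂ x)
        = (∫ x in Set.Ioc a b, ψ' x * f₁ x) - ∫ x in Set.Ioc a b, ψ' x * f₂ x := by
      have : (fun x => ψ' x * (f₁ x - f₂ x))
          = fun x => ψ' x * f₁ x - ψ' x * f₂ x := funext fun x => mul_sub _ _ _
      rw [this, integral_sub (hJint f₁ hm₁) (hJint f₂ hm₂)]
    have e5 : ∫ x in Set.Ioc a b, ψ' x * (f₃ x - f₄ x)
        = (∫ x in Set.Ioc a b, ψ' x * f₃ x) - ∫ x in Set.Ioc a b, ψ' x * f₄ x := by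
      have : (fun x => ψ' x * (f₃ x - f₄ x))
          = fun x => ψ' x * f₃ x - ψ' x * f₄ x := funext fun x => mul_sub _ _ _
      rw [this, integral_sub (hJint f₃ hm₃) (hJint f₄ hm₄)]
    rw [e0, e1, e2, e3, e4, e5]
  rw [hci, h₁, h₂, h₃, h₄, hfdef]
  push_cast
  ring
end

section
/- Let f, g : ℝ → ℝ be nondecreasing and right-continuous, with Lebesgue–Stieltjes measures μ_f, μ_g (so μ_f((a,b]) = f(b) − f(a) and likewise for g). For x ∈ ℝ set f^A(x) := (f(x) + lim_{y→x⁻} f(y))/2 and g^A(x) := (g(x) + lim_{y→x⁻} g(y))/2. Then for all a < b: f(b)g(b) − f(a)g(a) = ∫_{(a,b]} f^A dμ_g + ∫_{(a,b]} g^A dμ_f. (Product rule d(fg) = f^A dg + g^A df for functions of locally bounded variation.) -/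
open MeasureTheory Set Function

namespace ProductRuleAux

lemma integrableOn_aux (F : StieltjesFunction ℝ) (ν : Measure ℝ) {a b : ℝ}
    (hν : ν (Set.Ioc a b) ≠ ⊤) :
    IntegrableOn (fun y => F y + Function.leftLim F y - 2 * F a) (Set.Ioc a b) ν := by
  have hmeas : Measurable (fun y => F y + Function.leftLim F y - 2 * F a) :=
    (F.mono.measurable.add F.mono.leftLim.measurable).sub measurable_const
  have : IsFiniteMeasure (ν.restrict (Set.Ioc a b)) :=
    ⟨by rwa [Measure.restrict_apply_univ, lt_top_iff_ne_top]⟩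
  refine Integrable.mono' (integrable_const (2 * |F a| + 2 * |F b|))
    hmeas.aestronglyMeasurable ?_
  rw [ae_restrict_iff' measurableSet_Ioc]
  filter_upwards with y hy
  have h1 : F a ≤ F y := F.mono hy.1.le
  have h2 : F y ≤ F b := F.mono hy.2
  have h3 : F a ≤ leftLim F y := F.mono.le_leftLim hy.1
  have h4 : leftLim F y ≤ F y := F.mono.leftLim_le le_rfl
  rw [Real.norm_eq_abs, abs_le]
  constructor <;>
    linarith [neg_abs_le (F a), le_abs_self (F b), abs_nonneg (F a), abs_nonneg (F b),
      le_abs_self (F a), neg_abs_le (F b)]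

lemma conv (F : StieltjesFunction ℝ) (ν : Measure ℝ) {a b : ℝ}
    (hν : ν (Set.Ioc a b) ≠ ⊤) :
    ∫⁻ y in Set.Ioc a b,
        (ENNReal.ofReal (F y - F a) + ENNReal.ofReal (leftLim F y - F a)) ∂ν
      = ENNReal.ofReal (∫ y in Set.Ioc a b, (F y + leftLim F y - 2 * F a) ∂ν) := by
  rw [ofReal_integral_eq_lintegral_ofReal (integrableOn_aux F ν hν) ?_]
  · refine setLIntegral_congr_fun measurableSet_Ioc (fun y hy => ?_)
    have h1 : F a ≤ F y := F.mono hy.1.le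
    have h3 : F a ≤ leftLim F y := F.mono.le_leftLim hy.1
    rw [← ENNReal.ofReal_add (by linarith) (by linarith)]
    congr 1
    ring
  · rw [Filter.EventuallyLE, ae_restrict_iff' measurableSet_Ioc]
    filter_upwards with y hy
    have h1 : F a ≤ F y := F.mono hy.1.le
    have h3 : F a ≤ leftLim F y := F.mono.le_leftLim hy.1
    simp only [Pi.zero_apply]
    linarith

lemma core (F G : StieltjesFunction ℝ) {a b : ℝ} (hab : a < b) :
    (∫⁻ y in Set.Ioc a b,
        (ENNReal.ofReal (F y - F a) + ENNReal.ofReal (leftLim F y - F a)) ∂G.measure)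
      + (∫⁻ x in Set.Ioc a b,
        (ENNReal.ofReal (G x - G a) + ENNReal.ofReal (leftLim G x - G a)) ∂F.measure)
      = 2 * (ENNReal.ofReal (F b - F a) * ENNReal.ofReal (G b - G a)) := by
  set μ := F.measure.restrict (Set.Ioc a b) with hμdef
  set ν := G.measure.restrict (Set.Ioc a b) with hνdef
  have hμfin : IsFiniteMeasure μ :=
    ⟨by rw [hμdef, Measure.restrict_apply_univ, F.measure_Ioc]; exact ENNReal.ofReal_lt_top⟩
  have hνfin : IsFiniteMeasure ν :=
    ⟨by rw [hνdef, Measure.restrict_apply_univ, G.measure_Ioc]; exact ENNReal.ofReal_lt_top⟩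
  have hle : MeasurableSet {p : ℝ × ℝ | p.1 ≤ p.2} :=
    measurableSet_le measurable_fst measurable_snd
  have hle' : MeasurableSet {p : ℝ × ℝ | p.2 ≤ p.1} :=
    measurableSet_le measurable_snd measurable_fst
  -- total mass
  have htot : μ.prod ν Set.univ = ENNReal.ofReal (F b - F a) * ENNReal.ofReal (G b - G a) := by
    rw [← Set.univ_prod_univ, Measure.prod_prod, hμdef, hνdef,
      Measure.restrict_apply_univ, Measure.restrict_apply_univ, F.measure_Ioc, G.measure_Ioc]
  -- four section computations
  have hF1 : μ.prod ν {p : ℝ × ℝ | p.1 ≤ p.2}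
      = ∫⁻ y in Set.Ioc a b, ENNReal.ofReal (F y - F a) ∂G.measure := by
    rw [Measure.prod_apply_symm hle, hνdef]
    refine setLIntegral_congr_fun measurableSet_Ioc (fun y hy => ?_)
    have : (fun x => (x, y)) ⁻¹' {p : ℝ × ℝ | p.1 ≤ p.2} = Set.Iic y := rfl
    rw [this, hμdef, Measure.restrict_apply measurableSet_Iic]
    have : Set.Iic y ∩ Set.Ioc a b = Set.Ioc a y := by
      ext z
      simp only [Set.mem_inter_iff, Set.mem_Iic, Set.mem_Ioc]
      exact ⟨fun h => ⟨h.2.1, h.1⟩, fun h => ⟨h.2, h.1, h.2.trans hy.2⟩⟩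
    rw [this, F.measure_Ioc]
  have hF2 : μ.prod ν {p : ℝ × ℝ | p.1 < p.2}
      = ∫⁻ y in Set.Ioc a b, ENNReal.ofReal (leftLim F y - F a) ∂G.measure := by
    have hcs : {p : ℝ × ℝ | p.1 < p.2} = {p : ℝ × ℝ | p.2 ≤ p.1}ᶜ := by
      ext p; simp only [Set.mem_setOf_eq, Set.mem_compl_iff, not_le]
    rw [hcs, Measure.prod_apply_symm hle'.compl, hνdef]
    refine setLIntegral_congr_fun measurableSet_Ioc (fun y hy => ?_)
    have hpre : (fun x => (x, y)) ⁻¹' {p : ℝ × ℝ | p.2 ≤ p.1}ᶜ = Set.Iio y := by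
      ext x; simp only [Set.mem_preimage, Set.mem_compl_iff, Set.mem_setOf_eq, not_le, Set.mem_Iio]
    rw [hpre, hμdef, Measure.restrict_apply measurableSet_Iio]
    have : Set.Iio y ∩ Set.Ioc a b = Set.Ioo a y := by
      ext z
      simp only [Set.mem_inter_iff, Set.mem_Iio, Set.mem_Ioc, Set.mem_Ioo]
      exact ⟨fun h => ⟨h.2.1, h.1⟩, fun h => ⟨h.2, h.1, h.2.le.trans hy.2⟩⟩
    rw [this, F.measure_Ioo]
  have hG1 : μ.prod ν {p : ℝ × ℝ | p.2 ≤ p.1}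
      = ∫⁻ x in Set.Ioc a b, ENNReal.ofReal (G x - G a) ∂F.measure := by
    rw [Measure.prod_apply hle', hμdef]
    refine setLIntegral_congr_fun measurableSet_Ioc (fun x hx => ?_)
    have : Prod.mk x ⁻¹' {p : ℝ × ℝ | p.2 ≤ p.1} = Set.Iic x := rfl
    rw [this, hνdef, Measure.restrict_apply measurableSet_Iic]
    have : Set.Iic x ∩ Set.Ioc a b = Set.Ioc a x := by
      ext z
      simp only [Set.mem_inter_iff, Set.mem_Iic, Set.mem_Ioc]
      exact ⟨fun h => ⟨h.2.1, h.1⟩, fun h => ⟨h.2, h.1, h.2.trans hx.2⟩⟩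
    rw [this, G.measure_Ioc]
  have hG2 : μ.prod ν {p : ℝ × ℝ | p.2 < p.1}
      = ∫⁻ x in Set.Ioc a b, ENNReal.ofReal (leftLim G x - G a) ∂F.measure := by
    have hcs : {p : ℝ × ℝ | p.2 < p.1} = {p : ℝ × ℝ | p.1 ≤ p.2}ᶜ := by
      ext p; simp only [Set.mem_setOf_eq, Set.mem_compl_iff, not_le]
    rw [hcs, Measure.prod_apply hle.compl, hμdef]
    refine setLIntegral_congr_fun measurableSet_Ioc (fun x hx => ?_)
    have hpre : Prod.mk x ⁻¹' {p : ℝ × ℝ | p.1 ≤ p.2}ᶜ = Set.Iio x := by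
      ext y; simp only [Set.mem_preimage, Set.mem_compl_iff, Set.mem_setOf_eq, not_le, Set.mem_Iio]
    rw [hpre, hνdef, Measure.restrict_apply measurableSet_Iio]
    have : Set.Iio x ∩ Set.Ioc a b = Set.Ioo a x := by
      ext z
      simp only [Set.mem_inter_iff, Set.mem_Iio, Set.mem_Ioc, Set.mem_Ioo]
      exact ⟨fun h => ⟨h.2.1, h.1⟩, fun h => ⟨h.2, h.1, h.2.le.trans hx.2⟩⟩
    rw [this, G.measure_Ioo]
  -- two partitions of the square
  have hpart1 : μ.prod ν {p : ℝ × ℝ | p.1 ≤ p.2} + μ.prod ν {p : ℝ × ℝ | p.2 < p.1}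
      = μ.prod ν Set.univ := by
    have hc : {p : ℝ × ℝ | p.2 < p.1} = {p : ℝ × ℝ | p.1 ≤ p.2}ᶜ := by
      ext p; simp only [Set.mem_setOf_eq, Set.mem_compl_iff, not_le]
    rw [hc, measure_add_measure_compl hle]
  have hpart2 : μ.prod ν {p : ℝ × ℝ | p.2 ≤ p.1} + μ.prod ν {p : ℝ × ℝ | p.1 < p.2}
      = μ.prod ν Set.univ := by
    have hc : {p : ℝ × ℝ | p.1 < p.2} = {p : ℝ × ℝ | p.2 ≤ p.1}ᶜ := by
      ext p; simp only [Set.mem_setOf_eq, Set.mem_compl_iff, not_le]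
    rw [hc, measure_add_measure_compl hle']
  -- split the lintegrals of sums
  have hmF1 : Measurable fun y => ENNReal.ofReal (F y - F a) :=
    (F.mono.measurable.sub measurable_const).ennreal_ofReal
  have hmG1 : Measurable fun x => ENNReal.ofReal (G x - G a) :=
    (G.mono.measurable.sub measurable_const).ennreal_ofReal
  rw [lintegral_add_left hmF1, lintegral_add_left hmG1]
  rw [← hF1, ← hF2, ← hG1, ← hG2, ← htot]
  calc μ.prod ν {p : ℝ × ℝ | p.1 ≤ p.2} + μ.prod ν {p : ℝ × ℝ | p.1 < p.2}
        + (μ.prod ν {p : ℝ × ℝ | p.2 ≤ p.1} + μ.prod ν {p : ℝ × ℝ | p.2 < p.1})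
      = (μ.prod ν {p : ℝ × ℝ | p.1 ≤ p.2} + μ.prod ν {p : ℝ × ℝ | p.2 < p.1})
        + (μ.prod ν {p : ℝ × ℝ | p.2 ≤ p.1} + μ.prod ν {p : ℝ × ℝ | p.1 < p.2}) := by ring
    _ = 2 * μ.prod ν Set.univ := by rw [hpart1, hpart2, two_mul]

theorem key (F G : StieltjesFunction ℝ) {a b : ℝ} (hab : a < b) :
    F b * G b - F a * G a
      = (∫ x in Set.Ioc a b, (F x + Function.leftLim F x) / 2 ∂G.measure) +
          ∫ x in Set.Ioc a b, (G x + Function.leftLim G x) / 2 ∂F.measure := by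
  have hFfin : F.measure (Set.Ioc a b) ≠ ⊤ := by
    rw [F.measure_Ioc]; exact ENNReal.ofReal_ne_top
  have hGfin : G.measure (Set.Ioc a b) ≠ ⊤ := by
    rw [G.measure_Ioc]; exact ENNReal.ofReal_ne_top
  have hμfin : IsFiniteMeasure (F.measure.restrict (Set.Ioc a b)) :=
    ⟨by rw [Measure.restrict_apply_univ]; exact lt_top_iff_ne_top.2 hFfin⟩
  have hνfin : IsFiniteMeasure (G.measure.restrict (Set.Ioc a b)) :=
    ⟨by rw [Measure.restrict_apply_univ]; exact lt_top_iff_ne_top.2 hGfin⟩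
  set I := ∫ y in Set.Ioc a b, (F y + leftLim F y - 2 * F a) ∂G.measure with hIdef
  set J := ∫ x in Set.Ioc a b, (G x + leftLim G x - 2 * G a) ∂F.measure with hJdef
  have hI0 : 0 ≤ I := by
    refine setIntegral_nonneg measurableSet_Ioc fun y hy => ?_
    have h1 : F a ≤ F y := F.mono hy.1.le
    have h3 : F a ≤ leftLim F y := F.mono.le_leftLim hy.1
    linarith
  have hJ0 : 0 ≤ J := by
    refine setIntegral_nonneg measurableSet_Ioc fun y hy => ?_
    have h1 : G a ≤ G y := G.mono hy.1.le
    have h3 : G a ≤ leftLim G y := G.mono.le_leftLim hy.1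
    linarith
  have hIJ : ENNReal.ofReal I + ENNReal.ofReal J
      = ENNReal.ofReal (2 * ((F b - F a) * (G b - G a))) := by
    rw [hIdef, hJdef, ← conv F G.measure hGfin, ← conv G F.measure hFfin, core F G hab,
      ENNReal.ofReal_mul (by norm_num : (0:ℝ) ≤ 2),
      ENNReal.ofReal_mul (sub_nonneg.2 (F.mono hab.le)), ENNReal.ofReal_ofNat]
  have hreal : I + J = 2 * ((F b - F a) * (G b - G a)) := by
    rw [← ENNReal.ofReal_add hI0 hJ0] at hIJ
    have h2 : (0:ℝ) ≤ 2 * ((F b - F a) * (G b - G a)) := by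
      have := sub_nonneg.2 (F.mono hab.le)
      have := sub_nonneg.2 (G.mono hab.le)
      positivity
    exact (ENNReal.ofReal_eq_ofReal_iff (by linarith) h2).1 hIJ
  have split1 : ∫ x in Set.Ioc a b, (F x + Function.leftLim F x) / 2 ∂G.measure
      = I / 2 + F a * (G b - G a) := by
    have heq : ∀ x : ℝ, (F x + Function.leftLim F x) / 2
        = (F x + leftLim F x - 2 * F a) / 2 + F a := fun x => by ring
    simp_rw [heq]
    rw [integral_add ((integrableOn_aux F G.measure hGfin).div_const 2)
      (integrable_const (F a)), integral_div, ← hIdef]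
    rw [integral_const, measureReal_def, Measure.restrict_apply_univ, G.measure_Ioc,
      ENNReal.toReal_ofReal (sub_nonneg.2 (G.mono hab.le)), smul_eq_mul]
    ring
  have split2 : ∫ x in Set.Ioc a b, (G x + Function.leftLim G x) / 2 ∂F.measure
      = J / 2 + G a * (F b - F a) := by
    have heq : ∀ x : ℝ, (G x + Function.leftLim G x) / 2
        = (G x + leftLim G x - 2 * G a) / 2 + G a := fun x => by ring
    simp_rw [heq]
    rw [integral_add ((integrableOn_aux G F.measure hFfin).div_const 2)
      (integrable_const (G a)), integral_div, ← hJdef]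
    rw [integral_const, measureReal_def, Measure.restrict_apply_univ, F.measure_Ioc,
      ENNReal.toReal_ofReal (sub_nonneg.2 (F.mono hab.le)), smul_eq_mul]
    ring
  rw [split1, split2]
  linear_combination -(1/2 : ℝ) * hreal

end ProductRuleAux

/-- product rule `d(fg) = f^A dg + g^A df` for nondecreasing
right-continuous functions (Proposition 2.3), where `f^A` is the average of the
left and right limits. -/
theorem product_rule_bv
    (f g : ℝ → ℝ) (μf μg : Measure ℝ)
    (hfm : Monotone f) (hgm : Monotone g)
    (hfr : ∀ x, ContinuousWithinAt f (Set.Ici x) x)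
    (hgr : ∀ x, ContinuousWithinAt g (Set.Ici x) x)
    (hμf : ∀ a b : ℝ, a ≤ b → μf (Set.Ioc a b) = ENNReal.ofReal (f b - f a))
    (hμg : ∀ a b : ℝ, a ≤ b → μg (Set.Ioc a b) = ENNReal.ofReal (g b - g a))
    (a b : ℝ) (hab : a < b) :
    f b * g b - f a * g a
      = (∫ x in Set.Ioc a b, (f x + Function.leftLim f x) / 2 ∂μg) +
          ∫ x in Set.Ioc a b, (g x + Function.leftLim g x) / 2 ∂μf := by
  set F : StieltjesFunction ℝ := ⟨f, hfm, hfr⟩ with hFdef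
  set G : StieltjesFunction ℝ := ⟨g, hgm, hgr⟩ with hGdef
  have hF : μf = F.measure := by
    refine Measure.ext_of_Ioc' μf F.measure (fun x y h => ?_) (fun x y h => ?_)
    · rw [hμf x y h.le]; exact ENNReal.ofReal_ne_top
    · rw [hμf x y h.le, F.measure_Ioc]
  have hG : μg = G.measure := by
    refine Measure.ext_of_Ioc' μg G.measure (fun x y h => ?_) (fun x y h => ?_)
    · rw [hμg x y h.le]; exact ENNReal.ofReal_ne_top
    · rw [hμg x y h.le, G.measure_Ioc]
  rw [hF, hG]
  exact ProductRuleAux.key F G hab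
end

section
/- Let f : ℝ → ℝ be continuous and nondecreasing, with Lebesgue–Stieltjes measure μ_f, and let μ_{e^f} denote the Lebesgue–Stieltjes measure of the continuous nondecreasing function x ↦ e^{f(x)}. Then for every bounded Borel set B ⊆ ℝ, μ_{e^f}(B) = ∫_B e^{f(x)} dμ_f(x). (Chain rule d(e^f) = e^f df for continuous functions of locally bounded variation.) -/
open MeasureTheory

/-- The Stieltjes measure of a continuous nondecreasing `f`, restricted to `(a, b]`, pushes
forward under `f` to Lebesgue measure on `(f a, f b]`. -/
lemma map_restrict_stieltjes
    (f : ℝ → ℝ) (μf : Measure ℝ)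
    (hfm : Monotone f) (hfc : Continuous f)
    (hμf : ∀ a b : ℝ, a ≤ b → μf (Set.Ioc a b) = ENNReal.ofReal (f b - f a))
    (a b : ℝ) (hab : a ≤ b) :
    Measure.map f (μf.restrict (Set.Ioc a b)) = volume.restrict (Set.Ioc (f a) (f b)) := by
  haveI : IsFiniteMeasure (Measure.map f (μf.restrict (Set.Ioc a b))) := by
    constructor
    rw [Measure.map_apply hfc.measurable MeasurableSet.univ, Set.preimage_univ,
      Measure.restrict_apply MeasurableSet.univ, Set.univ_inter, hμf a b hab]
    exact ENNReal.ofReal_lt_top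
  refine Measure.ext_of_Iic _ _ fun c => ?_
  rw [Measure.map_apply hfc.measurable measurableSet_Iic,
    Measure.restrict_apply (hfc.measurable measurableSet_Iic),
    Measure.restrict_apply measurableSet_Iic]
  rcases lt_or_ge c (f a) with hc | hc
  · have h1 : f ⁻¹' Set.Iic c ∩ Set.Ioc a b = ∅ := by
      ext x
      simp only [Set.mem_inter_iff, Set.mem_preimage, Set.mem_Iic, Set.mem_Ioc,
        Set.mem_empty_iff_false, iff_false]
      rintro ⟨hxc, hax, hxb⟩
      exact absurd (le_trans (hfm hax.le) hxc) (not_le.2 hc)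
    have h2 : Set.Iic c ∩ Set.Ioc (f a) (f b) = ∅ := by
      ext y
      simp only [Set.mem_inter_iff, Set.mem_Iic, Set.mem_Ioc, Set.mem_empty_iff_false, iff_false]
      rintro ⟨hyc, hay, hyb⟩
      exact absurd (lt_of_lt_of_le hay hyc) (not_lt.2 hc.le)
    rw [h1, h2, measure_empty, measure_empty]
  rcases le_or_gt (f b) c with hcb | hcb
  · have h1 : f ⁻¹' Set.Iic c ∩ Set.Ioc a b = Set.Ioc a b := by
      apply Set.inter_eq_self_of_subset_right
      intro x hx
      exact le_trans (hfm hx.2) hcb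
    have h2 : Set.Iic c ∩ Set.Ioc (f a) (f b) = Set.Ioc (f a) (f b) := by
      apply Set.inter_eq_self_of_subset_right
      intro y hy
      exact le_trans hy.2 hcb
    rw [h1, h2, hμf a b hab, Real.volume_Ioc]
  · -- `f a ≤ c < f b`
    set K : Set ℝ := Set.Icc a b ∩ f ⁻¹' Set.Iic c with hK
    have hKne : K.Nonempty := ⟨a, ⟨le_refl a, hab⟩, hc⟩
    have hKbdd : BddAbove K := ⟨b, fun x hx => hx.1.2⟩
    have hKclosed : IsClosed K := (isClosed_Icc).inter (isClosed_Iic.preimage hfc)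
    set t := sSup K with ht
    have htK : t ∈ K := hKclosed.csSup_mem hKne hKbdd
    have hat : a ≤ t := le_csSup hKbdd ⟨⟨le_refl a, hab⟩, hc⟩
    have htb : t ≤ b := csSup_le hKne fun x hx => hx.1.2
    have hftc : f t = c := by
      have htc : f t ≤ c := htK.2
      rcases eq_or_lt_of_le htc with h | h
      · exact h
      · exfalso
        have htb' : t < b := by
          rcases eq_or_lt_of_le htb with h' | h'
          · rw [h'] at htc; exact absurd hcb (not_lt.2 htc)
          · exact h'
        have : ∃ ε > 0, Metric.ball t ε ⊆ f ⁻¹' Set.Iio c :=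
          Metric.isOpen_iff.1 (isOpen_Iio.preimage hfc) t h
        obtain ⟨ε, hε, hball⟩ := this
        set s := min b (t + ε / 2) with hs
        have hts : t < s := lt_min htb' (by linarith)
        have hsK : s ∈ K := by
          constructor
          · exact ⟨le_trans hat hts.le, min_le_left _ _⟩
          · have : s ∈ Metric.ball t ε := by
              rw [Real.ball_eq_Ioo]
              constructor
              · linarith
              · have : s ≤ t + ε / 2 := min_le_right _ _
                linarith
            show f s ≤ c
            exact le_of_lt (hball this)
        exact absurd (le_csSup hKbdd hsK) (not_le.2 hts)
    have h1 : f ⁻¹' Set.Iic c ∩ Set.Ioc a b = Set.Ioc a t := by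
      ext x
      simp only [Set.mem_inter_iff, Set.mem_preimage, Set.mem_Iic, Set.mem_Ioc]
      constructor
      · rintro ⟨hxc, hax, hxb⟩
        exact ⟨hax, le_csSup hKbdd ⟨⟨hax.le, hxb⟩, hxc⟩⟩
      · rintro ⟨hax, hxt⟩
        exact ⟨le_trans (hfm hxt) hftc.le, hax, le_trans hxt htb⟩
    have h2 : Set.Iic c ∩ Set.Ioc (f a) (f b) = Set.Ioc (f a) c := by
      ext y
      simp only [Set.mem_inter_iff, Set.mem_Iic, Set.mem_Ioc]
      constructor
      · rintro ⟨hyc, hay, hyb⟩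
        exact ⟨hay, hyc⟩
      · rintro ⟨hay, hyc⟩
        exact ⟨hyc, hay, le_trans hyc hcb.le⟩
    rw [h1, h2, hμf a t hat, hftc, Real.volume_Ioc]

/-- chain rule `d(e^f) = e^f df` for a continuous nondecreasing
function `f` (Proposition 2.4), at the level of Lebesgue–Stieltjes measures. -/
theorem chain_rule_bv
    (f : ℝ → ℝ) (μf μef : Measure ℝ)
    (hfm : Monotone f) (hfc : Continuous f)
    (hμf : ∀ a b : ℝ, a ≤ b → μf (Set.Ioc a b) = ENNReal.ofReal (f b - f a))
    (hμef : ∀ a b : ℝ, a ≤ b →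
      μef (Set.Ioc a b) = ENNReal.ofReal (Real.exp (f b) - Real.exp (f a)))
    (B : Set ℝ) (hB : MeasurableSet B) (hBb : Bornology.IsBounded B) :
    μef B = ∫⁻ x in B, ENNReal.ofReal (Real.exp (f x)) ∂μf := by
  set g : ℝ → ENNReal := fun x => ENNReal.ofReal (Real.exp (f x)) with hg
  have hgm : Measurable g :=
    ENNReal.measurable_ofReal.comp (Real.continuous_exp.comp hfc).measurable
  have key : ∀ a b : ℝ, a ≤ b →
      ∫⁻ x in Set.Ioc a b, g x ∂μf
        = ENNReal.ofReal (Real.exp (f b) - Real.exp (f a)) := by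
    intro a b hab
    have hmap := map_restrict_stieltjes f μf hfm hfc hμf a b hab
    have step1 : ∫⁻ x in Set.Ioc a b, g x ∂μf
        = ∫⁻ y, ENNReal.ofReal (Real.exp y) ∂(Measure.map f (μf.restrict (Set.Ioc a b))) :=
      (lintegral_map Real.measurable_exp.ennreal_ofReal hfc.measurable).symm
    rw [step1, hmap]
    have hint : IntegrableOn Real.exp (Set.Ioc (f a) (f b)) volume :=
      Real.continuous_exp.integrableOn_Ioc
    rw [← ofReal_integral_eq_lintegral_ofReal hint
      (Filter.Eventually.of_forall fun x => (Real.exp_pos x).le)]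
    congr 1
    rw [← intervalIntegral.integral_of_le (hfm hab), integral_exp]
  have hee : μef = μf.withDensity g := by
    refine Measure.ext_of_Ioc' μef _ (fun a b h => ?_) (fun a b h => ?_)
    · rw [hμef a b h.le]; exact ENNReal.ofReal_ne_top
    · rw [hμef a b h.le, withDensity_apply _ measurableSet_Ioc, key a b h.le]
  rw [hee, withDensity_apply _ hB]
end

section
/- Let V be a finite real signed Borel measure on ℝ with total variation norm ‖V‖ := |V|(ℝ). Let u : ℝ → ℂ be continuous, square-integrable, and locally absolutely continuous with a.e.-derivative u' ∈ L²(ℝ). Then u is bounded, |u|² is integrable with respect to |V|, and for every γ > 0: | ∫ |u(x)|² dV(x) | ≤ ‖V‖ ( (1/(2γ)) ‖u‖²_{L²} + (γ/2) ‖u'‖²_{L²} ). Consequently, for every h > 0, taking γ = h²/‖V‖: −(‖V‖²/(2h²)) ‖u‖²_{L²} + (h²/2) ‖u'‖²_{L²} ≤ h²‖u'‖²_{L²} + ∫ |u|² dV ≤ (‖V‖²/(2h²)) ‖u‖²_{L²} + (3h²/2) ‖u'‖²_{L²}. In particular the quadratic form q(u,u) = h²‖u'‖² + ∫|u|²dV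 is semibounded below. -/
/-!
Writing `u(t) = u(0) + ∫₀ᵗ u'`, the function `|u|²` is absolutely continuous with derivative
`2 Re (ū u')`, which is integrable by Cauchy–Schwarz. Since `|u|²` is integrable, it vanishes at
`±∞`, so integrating from `-∞` and from `+∞` gives `2 |u(x)|² ≤ ∫ 2 |u| |u'|`. The AM–GM
inequality with weight `γ` turns this into
`sup |u|² ≤ (1/2γ) ‖u‖² + (γ/2) ‖u'‖²`, and integrating against `V⁺` and `V⁻` gives the form
bound. The sandwich is the choice `γ = h² / ‖V‖`.
-/

open MeasureTheory

/-- Integral of a real-valued function against a finite real signed Borel measure. -/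
noncomputable def signedIntR (V : SignedMeasure ℝ) (f : ℝ → ℝ) : ℝ :=
  (∫ x, f x ∂V.toJordanDecomposition.posPart) -
    ∫ x, f x ∂V.toJordanDecomposition.negPart

/-- Total variation norm ‖V‖ = |V|(ℝ) of a finite signed Borel measure. -/
noncomputable def VNorm (V : SignedMeasure ℝ) : ℝ :=
  (V.totalVariation Set.univ).toReal

open Set Filter Topology

open scoped ComplexConjugate

lemma MeasureTheory.LocallyIntegrable.intervalIntegrable {E : Type*} [NormedAddCommGroup E]
    {f : ℝ → E} (hf : LocallyIntegrable f volume) (a b : ℝ) : IntervalIntegrable f volume a b :=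
  intervalIntegrable_iff.2 <| (hf.integrableOn_isCompact isCompact_uIcc).mono_set uIoc_subset_uIcc

lemma sq_sub_sq_eq_two_mul_integral_mul {f f' : ℝ → ℝ} (hf' : LocallyIntegrable f' volume)
    (hf : ∀ x, f x = f 0 + ∫ t in (0 : ℝ)..x, f' t) (a b : ℝ) :
    f b ^ 2 - f a ^ 2 = 2 * ∫ t in a..b, f t * f' t := by
  have hf_eq : f = fun x => f a + ∫ t in a..x, f' t := funext fun x => by
    rw [hf x, hf a, ← intervalIntegral.integral_interval_sub_left (hf'.intervalIntegrable 0 x)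
      (hf'.intervalIntegrable 0 a)]
    ring
  have hac : AbsolutelyContinuousOnInterval f a b := by
    have := (hf'.intervalIntegrable a b).absolutelyContinuousOnInterval_intervalIntegral
      left_mem_uIcc
    rw [hf_eq]
    simpa only [AbsolutelyContinuousOnInterval, dist_add_left] using this
  have hderiv : ∀ᵐ x, deriv f x = f' x := by
    filter_upwards [_root_.LocallyIntegrable.ae_hasDerivAt_integral hf'] with x hx
    rw [funext hf]
    exact ((hx 0).const_add (f 0)).deriv
  rw [← intervalIntegral.integral_const_mul, sq, sq, ← hac.integral_deriv_mul_eq_sub hac]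
  refine intervalIntegral.integral_congr_ae ?_
  filter_upwards [hderiv] with x hx _
  rw [hx]
  ring

lemma norm_sq_sub_norm_sq_eq_two_mul_integral_re {u u' : ℝ → ℂ}
    (hu' : LocallyIntegrable u' volume) (hu : ∀ x, u x = u 0 + ∫ t in (0 : ℝ)..x, u' t)
    (a b : ℝ) :
    ‖u b‖ ^ 2 - ‖u a‖ ^ 2 = 2 * ∫ t in a..b, (conj (u t) * u' t).re := by
  have hcont : Continuous u := by
    rw [funext hu]
    exact continuous_const.add (intervalIntegral.continuous_primitive hu'.intervalIntegrable 0)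
  have hu're : LocallyIntegrable (fun t => (u' t).re) volume :=
    locallyIntegrable_iff.2 fun k hk => (hu'.integrableOn_isCompact hk).re
  have hu'im : LocallyIntegrable (fun t => (u' t).im) volume :=
    locallyIntegrable_iff.2 fun k hk => (hu'.integrableOn_isCompact hk).im
  have hre := sq_sub_sq_eq_two_mul_integral_mul (f := fun x => (u x).re) hu're (fun x => by
    rw [hu x, Complex.add_re]
    exact congrArg _ (intervalIntegral.intervalIntegral_re (hu'.intervalIntegrable 0 x)).symm) a b
  have him := sq_sub_sq_eq_two_mul_integral_mul (f := fun x => (u x).im) hu'im (fun x => by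
    rw [hu x, Complex.add_im]
    exact congrArg _ (intervalIntegral.intervalIntegral_im (hu'.intervalIntegrable 0 x)).symm) a b
  have hint_re : IntervalIntegrable (fun t => (u t).re * (u' t).re) volume a b :=
    (hu're.intervalIntegrable a b).continuousOn_mul (Complex.continuous_re.comp hcont).continuousOn
  have hint_im : IntervalIntegrable (fun t => (u t).im * (u' t).im) volume a b :=
    (hu'im.intervalIntegrable a b).continuousOn_mul (Complex.continuous_im.comp hcont).continuousOn
  simp only [Complex.sq_norm, Complex.normSq_apply, Complex.mul_re, Complex.conj_re,
    Complex.conj_im, neg_mul, sub_neg_eq_add]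
  rw [intervalIntegral.integral_add hint_re hint_im]
  linear_combination hre + him

lemma volume_eq_top_of_mem_atTop {s : Set ℝ} (hs : s ∈ atTop) : volume s = ⊤ := by
  obtain ⟨b, hb⟩ := mem_atTop_sets.1 hs
  exact top_le_iff.1 (Real.volume_Ici (a := b) ▸ measure_mono fun x hx => hb x hx)

lemma volume_eq_top_of_mem_atBot {s : Set ℝ} (hs : s ∈ atBot) : volume s = ⊤ := by
  obtain ⟨b, hb⟩ := mem_atBot_sets.1 hs
  exact top_le_iff.1 (Real.volume_Iic (a := b) ▸ measure_mono fun x hx => hb x hx)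

lemma two_mul_norm_le_integral_norm_of_sub_eq_integral {E : Type*} [NormedAddCommGroup E]
    [NormedSpace ℝ E] [CompleteSpace E] {g φ : ℝ → E} (hg : Integrable g) (hφ : Integrable φ)
    (hgφ : ∀ a b, g b - g a = ∫ t in a..b, φ t) (x : ℝ) :
    2 * ‖g x‖ ≤ ∫ t, ‖φ t‖ := by
  have hleft : g x = ∫ t in Iic x, φ t := by
    have hlim : Tendsto g atBot (𝓝 (g x - ∫ t in Iic x, φ t)) := by
      refine (tendsto_const_nhds.sub
        (intervalIntegral_tendsto_integral_Iic x hφ.integrableOn tendsto_id)).congr fun a => ?_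
      rw [id, ← hgφ]
      abel
    exact sub_eq_zero.1 <| (hg.integrableAtFilter atBot).eq_zero_of_tendsto
      (fun _ => volume_eq_top_of_mem_atBot) hlim
  have hright : g x = -∫ t in Ioi x, φ t := by
    have hlim : Tendsto g atTop (𝓝 (g x + ∫ t in Ioi x, φ t)) := by
      refine (tendsto_const_nhds.add
        (intervalIntegral_tendsto_integral_Ioi x hφ.integrableOn tendsto_id)).congr fun a => ?_
      rw [id, ← hgφ]
      abel
    exact eq_neg_of_add_eq_zero_left <| (hg.integrableAtFilter atTop).eq_zero_of_tendsto
      (fun _ => volume_eq_top_of_mem_atTop) hlim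
  calc 2 * ‖g x‖ = ‖g x‖ + ‖g x‖ := two_mul _
    _ ≤ (∫ t in Iic x, ‖φ t‖) + ∫ t in Ioi x, ‖φ t‖ := by
      nth_rw 1 [hleft, hright, norm_neg]
      exact add_le_add (norm_integral_le_integral_norm _) (norm_integral_le_integral_norm _)
    _ = ∫ t, ‖φ t‖ :=
      intervalIntegral.integral_Iic_add_Ioi hφ.norm.integrableOn hφ.norm.integrableOn

lemma norm_sq_le_integral_norm_mul_norm {u u' : ℝ → ℂ} (hu : MemLp u 2 volume)
    (hu' : MemLp u' 2 volume) (hprim : ∀ x, u x = u 0 + ∫ t in (0 : ℝ)..x, u' t) (x : ℝ) :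
    ‖u x‖ ^ 2 ≤ ∫ t, ‖u t‖ * ‖u' t‖ := by
  set φ : ℝ → ℝ := fun t => 2 * (conj (u t) * u' t).re
  have hφ_le : ∀ t, ‖φ t‖ ≤ 2 * (‖u t‖ * ‖u' t‖) := fun t => by
    rw [Real.norm_eq_abs, abs_mul, abs_two, ← Complex.norm_conj (u t), ← norm_mul]
    exact mul_le_mul_of_nonneg_left (Complex.abs_re_le_norm _) zero_le_two
  have hprod : Integrable (fun t => ‖u t‖ * ‖u' t‖) := hu.norm.integrable_mul hu'.norm
  have hφ : Integrable φ := by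
    have hu_meas := hu.aestronglyMeasurable
    have hu'_meas := hu'.aestronglyMeasurable
    exact (hprod.const_mul 2).mono' (by fun_prop) (ae_of_all _ hφ_le)
  have hbound := two_mul_norm_le_integral_norm_of_sub_eq_integral (g := fun t => ‖u t‖ ^ 2)
    hu.norm.integrable_sq hφ (fun a b => by
      rw [norm_sq_sub_norm_sq_eq_two_mul_integral_re (hu'.locallyIntegrable one_le_two) hprim,
        intervalIntegral.integral_const_mul]) x
  have hφ_int : ∫ t, ‖φ t‖ ≤ 2 * ∫ t, ‖u t‖ * ‖u' t‖ := by
    rw [← integral_const_mul]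
    exact integral_mono hφ.norm (hprod.const_mul 2) hφ_le
  rw [Real.norm_of_nonneg (by positivity)] at hbound
  linarith

lemma integral_mul_le_of_memLp_two {α : Type*} [MeasurableSpace α] {μ : Measure α}
    {f g : α → ℝ} (hf : MemLp f 2 μ) (hg : MemLp g 2 μ) {γ : ℝ} (hγ : 0 < γ) :
    ∫ x, f x * g x ∂μ ≤ 1 / (2 * γ) * ∫ x, f x ^ 2 ∂μ + γ / 2 * ∫ x, g x ^ 2 ∂μ := by
  have hf2 := hf.integrable_sq.const_mul (1 / (2 * γ))
  have hg2 := hg.integrable_sq.const_mul (γ / 2)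
  rw [← integral_const_mul, ← integral_const_mul, ← integral_add hf2 hg2]
  refine integral_mono (hf.integrable_mul hg) (hf2.add hg2) fun x => ?_
  have hsq : 0 ≤ (f x - γ * g x) ^ 2 / (2 * γ) := by positivity
  have hexp : (f x - γ * g x) ^ 2 / (2 * γ)
      = 1 / (2 * γ) * f x ^ 2 + γ / 2 * g x ^ 2 - f x * g x := by
    field_simp
    ring
  linarith

lemma VNorm_eq_add (V : SignedMeasure ℝ) :
    VNorm V = V.toJordanDecomposition.posPart.real univ +
      V.toJordanDecomposition.negPart.real univ := by
  rw [VNorm, SignedMeasure.totalVariation, Measure.add_apply,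
    ENNReal.toReal_add (measure_ne_top _ _) (measure_ne_top _ _)]
  rfl

lemma abs_signedIntR_le (V : SignedMeasure ℝ) {f : ℝ → ℝ} {C : ℝ} (hf : ∀ x, ‖f x‖ ≤ C) :
    |signedIntR V f| ≤ VNorm V * C := by
  set P := V.toJordanDecomposition.posPart
  set N := V.toJordanDecomposition.negPart
  have hP : ‖∫ x, f x ∂P‖ ≤ C * P.real univ := norm_integral_le_of_norm_le_const (ae_of_all _ hf)
  have hN : ‖∫ x, f x ∂N‖ ≤ C * N.real univ := norm_integral_le_of_norm_le_const (ae_of_all _ hf)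
  rw [signedIntR, VNorm_eq_add]
  calc |(∫ x, f x ∂P) - ∫ x, f x ∂N| ≤ |∫ x, f x ∂P| + |∫ x, f x ∂N| := abs_sub _ _
    _ ≤ C * P.real univ + C * N.real univ := add_le_add hP hN
    _ = (P.real univ + N.real univ) * C := by ring

lemma le_sq_div_mul_add_of_forall_pos_le {s v b c h : ℝ} (hv : 0 ≤ v) (hc : 0 ≤ c)
    (hh : 0 < h) (hs : ∀ γ : ℝ, 0 < γ → s ≤ v * (1 / (2 * γ) * b + γ / 2 * c)) :
    s ≤ v ^ 2 / (2 * h ^ 2) * b + h ^ 2 / 2 * c := by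
  rcases hv.eq_or_lt with rfl | hv
  · have hs1 := hs 1 one_pos
    rw [zero_mul] at hs1
    rw [zero_pow two_ne_zero, zero_div, zero_mul, zero_add]
    exact hs1.trans (by positivity)
  · convert hs (h ^ 2 / v) (by positivity) using 1
    field_simp

theorem form_bound_general
    (V : SignedMeasure ℝ)
    (u u' : ℝ → ℂ)
    (hcont : Continuous u)
    (huL2 : MemLp u 2 volume)
    (hftc : ∀ x : ℝ, u x = u 0 + ∫ t in (0:ℝ)..x, u' t)
    (hu'L2 : MemLp u' 2 volume) :
    (∃ M : ℝ, ∀ x : ℝ, ‖u x‖ ≤ M) ∧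
    Integrable (fun x : ℝ => ‖u x‖ ^ 2) V.totalVariation ∧
    (∀ γ : ℝ, 0 < γ →
      |signedIntR V (fun x => ‖u x‖ ^ 2)|
        ≤ VNorm V * ((1 / (2 * γ)) * (∫ x : ℝ, ‖u x‖ ^ 2) +
            (γ / 2) * ∫ x : ℝ, ‖u' x‖ ^ 2)) ∧
    (∀ h : ℝ, 0 < h →
      (-(VNorm V ^ 2 / (2 * h ^ 2)) * (∫ x : ℝ, ‖u x‖ ^ 2) +
          (h ^ 2 / 2) * ∫ x : ℝ, ‖u' x‖ ^ 2
        ≤ h ^ 2 * (∫ x : ℝ, ‖u' x‖ ^ 2) + signedIntR V (fun x => ‖u x‖ ^ 2)) ∧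
      (h ^ 2 * (∫ x : ℝ, ‖u' x‖ ^ 2) + signedIntR V (fun x => ‖u x‖ ^ 2)
        ≤ (VNorm V ^ 2 / (2 * h ^ 2)) * (∫ x : ℝ, ‖u x‖ ^ 2) +
            (3 * h ^ 2 / 2) * ∫ x : ℝ, ‖u' x‖ ^ 2)) := by
  have hsup : ∀ γ : ℝ, 0 < γ → ∀ x, ‖‖u x‖ ^ 2‖ ≤
      (1 / (2 * γ)) * (∫ x : ℝ, ‖u x‖ ^ 2) + (γ / 2) * ∫ x : ℝ, ‖u' x‖ ^ 2 := fun γ hγ x =>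
    (Real.norm_of_nonneg (by positivity)).trans_le <|
      (norm_sq_le_integral_norm_mul_norm huL2 hu'L2 hftc x).trans
        (integral_mul_le_of_memLp_two huL2.norm hu'L2.norm hγ)
  have hform : ∀ γ : ℝ, 0 < γ → |signedIntR V (fun x => ‖u x‖ ^ 2)| ≤ VNorm V *
      ((1 / (2 * γ)) * (∫ x : ℝ, ‖u x‖ ^ 2) + (γ / 2) * ∫ x : ℝ, ‖u' x‖ ^ 2) := fun γ hγ =>
    abs_signedIntR_le V (hsup γ hγ)
  refine ⟨⟨_, fun x => Real.le_sqrt_of_sq_le ((Real.le_norm_self _).trans (hsup 1 one_pos x))⟩,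
    .of_bound (hcont.norm.pow 2).aestronglyMeasurable _ (ae_of_all _ (hsup 1 one_pos)),
    hform, fun h hh => ?_⟩
  have hsandwich := le_sq_div_mul_add_of_forall_pos_le (v := VNorm V) ENNReal.toReal_nonneg
    (integral_nonneg fun x => by positivity) hh hform
  rw [abs_le'] at hsandwich
  constructor <;> linarith

/-- the form bound (3.5)–(3.6): for `u ∈ H¹(ℝ)`,
`|∫ |u|² dV| ≤ ‖V‖ ((1/2γ)‖u‖² + (γ/2)‖u'‖²)` for every `γ > 0`, and the
quadratic form `h²‖u'‖² + ∫|u|²dV` is sandwiched accordingly; in particular it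
is semibounded. -/
theorem form_bound
    (V : SignedMeasure ℝ)
    (u u' : ℝ → ℂ)
    (hcont : Continuous u)
    (huL2 : MemLp u 2 volume)
    (hftc : ∀ x : ℝ, u x = u 0 + ∫ t in (0:ℝ)..x, u' t)
    (hu'meas : AEStronglyMeasurable u' volume)
    (hu'L2 : MemLp u' 2 volume) :
    (∃ M : ℝ, ∀ x : ℝ, ‖u x‖ ≤ M) ∧
    Integrable (fun x : ℝ => ‖u x‖ ^ 2) V.totalVariation ∧
    (∀ γ : ℝ, 0 < γ →
      |signedIntR V (fun x => ‖u x‖ ^ 2)|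
        ≤ VNorm V * ((1 / (2 * γ)) * (∫ x : ℝ, ‖u x‖ ^ 2) +
            (γ / 2) * ∫ x : ℝ, ‖u' x‖ ^ 2)) ∧
    (∀ h : ℝ, 0 < h →
      (-(VNorm V ^ 2 / (2 * h ^ 2)) * (∫ x : ℝ, ‖u x‖ ^ 2) +
          (h ^ 2 / 2) * ∫ x : ℝ, ‖u' x‖ ^ 2
        ≤ h ^ 2 * (∫ x : ℝ, ‖u' x‖ ^ 2) + signedIntR V (fun x => ‖u x‖ ^ 2)) ∧
      (h ^ 2 * (∫ x : ℝ, ‖u' x‖ ^ 2) + signedIntR V (fun x => ‖u x‖ ^ 2)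
        ≤ (VNorm V ^ 2 / (2 * h ^ 2)) * (∫ x : ℝ, ‖u x‖ ^ 2) +
            (3 * h ^ 2 / 2) * ∫ x : ℝ, ‖u' x‖ ^ 2)) :=
  form_bound_general V u u' hcont huL2 hftc hu'L2
end

section
/- Let (x_j)_{j∈ℕ} be pairwise distinct real numbers and let (a_j)_{j∈ℕ} be nonnegative reals with Σ_j a_j < ∞. Fix k ∈ ℕ. Then lim_{η→0⁺} (1/(√π · η)) Σ_j a_j ∫_{−∞}^{x_k} e^{−((x − x_j)/η)²} dx = a_k/2 + Σ_{j : x_j < x_k} a_j. (The Gaussian regularizations of the purely atomic measure Σ a_j δ_{x_j} converge, when integrated up to an atom x_k, to the sum of the masses strictly to the left of x_k plus half the mass at x_k.) -/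
open MeasureTheory Real Filter

noncomputable def Phi (s : ℝ) : ℝ := ∫ u in Set.Iic s, Real.exp (-u ^ 2)

lemma gauss_integrable : Integrable (fun u : ℝ => Real.exp (-u ^ 2)) := by
  simpa using integrable_exp_neg_mul_sq one_pos

lemma gauss_total : ∫ u : ℝ, Real.exp (-u ^ 2) = Real.sqrt π := by
  simpa using integral_gaussian 1

lemma Phi_nonneg (s : ℝ) : 0 ≤ Phi s :=
  setIntegral_nonneg measurableSet_Iic fun _ _ => (Real.exp_pos _).le

lemma Phi_le (s : ℝ) : Phi s ≤ Real.sqrt π := by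
  rw [← gauss_total]
  exact setIntegral_le_integral gauss_integrable
    (Eventually.of_forall fun _ => (Real.exp_pos _).le)

lemma Phi_atTop : Tendsto Phi atTop (nhds (Real.sqrt π)) := by
  have h := tendsto_setIntegral_of_monotone (μ := volume)
    (s := fun i : ℝ => Set.Iic i) (f := fun u => Real.exp (-u ^ 2))
    (fun i => measurableSet_Iic) (fun i j hij => Set.Iic_subset_Iic.mpr hij)
    (by rw [Set.iUnion_Iic]; exact gauss_integrable.integrableOn)
  rw [Set.iUnion_Iic] at h
  exact (by simpa [gauss_total] using h :
    Tendsto (fun i : ℝ => ∫ u in Set.Iic i, Real.exp (-u ^ 2)) atTop (nhds (Real.sqrt π)))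

lemma Phi_atBot : Tendsto Phi atBot (nhds 0) := by
  have h := tendsto_setIntegral_of_antitone (μ := volume)
    (s := fun i : ℝ => Set.Iic (-i)) (f := fun u => Real.exp (-u ^ 2))
    (fun i => measurableSet_Iic)
    (fun i j hij => Set.Iic_subset_Iic.mpr (by linarith))
    ⟨0, gauss_integrable.integrableOn⟩
  have he : ⋂ i : ℝ, Set.Iic (-i) = (∅ : Set ℝ) := by
    ext u
    simp only [Set.mem_iInter, Set.mem_Iic, Set.mem_empty_iff_false, iff_false, not_forall, not_le]
    exact ⟨-u + 1, by linarith⟩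
  rw [he] at h
  simp only [Measure.restrict_empty, integral_zero_measure] at h
  have h2 := h.comp tendsto_neg_atBot_atTop
  have hfe : Phi = (fun i : ℝ => ∫ u in Set.Iic (-i), Real.exp (-u ^ 2)) ∘ Neg.neg := by
    funext s; simp [Phi]
  rw [hfe]
  exact h2

lemma Phi_zero : Phi 0 = Real.sqrt π / 2 := by
  have h1 : ∫ u in Set.Iic (0:ℝ), Real.exp (-u ^ 2) = ∫ u in Set.Ioi (0:ℝ), Real.exp (-u ^ 2) := by
    have h := integral_comp_neg_Iic (0:ℝ) (fun u => Real.exp (-u ^ 2))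
    simp only [neg_zero, neg_sq] at h
    exact h
  have h2 : (∫ u in Set.Iic (0:ℝ), Real.exp (-u ^ 2)) + ∫ u in Set.Ioi (0:ℝ), Real.exp (-u ^ 2)
      = Real.sqrt π := by
    rw [← gauss_total,
      ← setIntegral_union (Set.Iic_disjoint_Ioi le_rfl) measurableSet_Ioi
        gauss_integrable.integrableOn gauss_integrable.integrableOn,
      Set.Iic_union_Ioi, Measure.restrict_univ]
  unfold Phi
  linarith [h1, h2]

lemma gauss_subst (c m η : ℝ) (hη : 0 < η) :
    ∫ t in Set.Iic c, Real.exp (-((t - m) / η) ^ 2) = η * Phi ((c - m) / η) := by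
  have hne : η ≠ 0 := hη.ne'
  set φ : ℝ ≃ₜ ℝ := affineHomeomorph η m hne with hφ
  have hφfun : ∀ u, φ u = η * u + m := fun u => rfl
  have hmap : Measure.map (fun u : ℝ => η * u + m) volume
      = ENNReal.ofReal η⁻¹ • volume := by
    have hc : (fun u : ℝ => η * u + m) = (fun v => v + m) ∘ (fun u => η * u) := rfl
    rw [hc, ← Measure.map_map (measurable_add_const m) (measurable_const_mul η),
      Real.map_volume_mul_left hne, Measure.map_smul,
      map_add_right_eq_self volume m, abs_of_pos (inv_pos.mpr hη)]
  have hemb : MeasurableEmbedding (fun u : ℝ => η * u + m) := by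
    have := φ.measurableEmbedding
    simpa [hφ, affineHomeomorph] using this
  have hpre : (fun u : ℝ => η * u + m) ⁻¹' Set.Iic c = Set.Iic ((c - m) / η) := by
    ext u
    simp only [Set.mem_preimage, Set.mem_Iic, le_div_iff₀ hη]
    constructor <;> intro h <;> nlinarith
  have h2 := hemb.setIntegral_map (μ := volume)
    (g := fun t => Real.exp (-((t - m) / η) ^ 2)) (s := Set.Iic c)
  rw [hmap, hpre] at h2
  have h3 : ∀ u : ℝ, Real.exp (-((η * u + m - m) / η) ^ 2) = Real.exp (-u ^ 2) := by
    intro u; congr 1; field_simp; ring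
  simp only [h3] at h2
  rw [Measure.restrict_smul, integral_smul_measure,
    ENNReal.toReal_ofReal (inv_nonneg.mpr hη.le)] at h2
  unfold Phi
  rw [← h2]
  rw [smul_eq_mul, ← mul_assoc, mul_inv_cancel₀ hne, one_mul]

/-- Gaussian regularization of an atomic measure: as `η → 0⁺`,
`(1/(√π η)) Σⱼ aⱼ ∫_{-∞}^{x_k} e^{-((x - x_j)/η)²} dx → a_k/2 + Σ_{x_j < x_k} a_j`. -/
theorem gaussian_regularization_atoms
    (x : ℕ → ℝ) (a : ℕ → ℝ)
    (hx : Function.Injective x)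
    (ha : ∀ j, 0 ≤ a j) (hsum : Summable a) (k : ℕ) :
    Tendsto
      (fun η : ℝ =>
        (1 / (Real.sqrt π * η)) *
          ∑' j : ℕ, a j * ∫ t in Set.Iic (x k), Real.exp (-((t - x j) / η) ^ 2))
      (nhdsWithin 0 (Set.Ioi 0))
      (nhds (a k / 2 + ∑' j : {j : ℕ // x j < x k}, a j.1)) := by
  have hπ : (0:ℝ) < Real.sqrt π := Real.sqrt_pos.mpr Real.pi_pos
  set g : ℕ → ℝ := fun j =>
    (if j = k then a k / 2 else 0) + Set.indicator {j | x j < x k} a j with hg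
  -- the limit equals ∑' g
  have hlim : (∑' j, g j) = a k / 2 + ∑' j : {j : ℕ // x j < x k}, a j.1 := by
    rw [hg]
    rw [Summable.tsum_add ((hasSum_ite_eq k (a k / 2)).summable) (hsum.indicator _),
      (hasSum_ite_eq k (a k / 2)).tsum_eq, ← tsum_subtype]
    rfl
  rw [← hlim]
  -- rewrite the function on Ioi 0
  have heq : ∀ᶠ η in nhdsWithin (0:ℝ) (Set.Ioi 0),
      (1 / (Real.sqrt π * η)) *
          ∑' j : ℕ, a j * ∫ t in Set.Iic (x k), Real.exp (-((t - x j) / η) ^ 2)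
        = ∑' j : ℕ, a j * (Phi ((x k - x j) / η) / Real.sqrt π) := by
    filter_upwards [self_mem_nhdsWithin] with η (hη : 0 < η)
    rw [← tsum_mul_left]
    refine tsum_congr fun j => ?_
    rw [gauss_subst (x k) (x j) η hη]
    field_simp
  refine Tendsto.congr' (heq.mono fun η h => h.symm) ?_
  -- Tannery
  refine tendsto_tsum_of_dominated_convergence hsum (fun j => ?_) (Eventually.of_forall fun η j => ?_)
  · -- per-j limit
    rcases eq_or_ne j k with rfl | hjk
    · have : ∀ η : ℝ, a j * (Phi ((x j - x j) / η) / Real.sqrt π) = a j / 2 := by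
        intro η
        rw [sub_self, zero_div, Phi_zero]
        field_simp
      simp only [this]
      have : g j = a j / 2 := by
        simp [hg, Set.indicator_of_notMem (by simp : j ∉ {i | x i < x j})]
      rw [this]
      exact tendsto_const_nhds
    · rcases lt_or_gt_of_ne (fun h => hjk (hx h)) with hlt | hgt
      · -- x j < x k : limit a j
        have hgj : g j = a j := by
          simp [hg, hjk, Set.indicator_of_mem (by simpa using hlt : j ∈ {i | x i < x k})]
        rw [hgj]
        have hc : 0 < x k - x j := by linarith
        have h1 : Tendsto (fun η : ℝ => (x k - x j) / η) (nhdsWithin 0 (Set.Ioi 0)) atTop := by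
          simpa [div_eq_mul_inv] using (tendsto_inv_nhdsGT_zero).const_mul_atTop hc
        have h2 := Phi_atTop.comp h1
        have h3 : Tendsto (fun η : ℝ => a j * (Phi ((x k - x j) / η) / Real.sqrt π))
            (nhdsWithin 0 (Set.Ioi 0)) (nhds (a j * (Real.sqrt π / Real.sqrt π))) :=
          (tendsto_const_nhds.mul (h2.div_const _)).congr fun η => rfl
        simpa [div_self hπ.ne'] using h3
      · -- x k < x j : limit 0
        have hgj : g j = 0 := by
          simp [hg, hjk, Set.indicator_of_notMem (by simp [not_lt, hgt.le] : j ∉ {i | x i < x k})]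
        rw [hgj]
        have hc : x k - x j < 0 := by linarith
        have h1 : Tendsto (fun η : ℝ => (x k - x j) / η) (nhdsWithin 0 (Set.Ioi 0)) atBot := by
          simpa [div_eq_mul_inv] using (tendsto_inv_nhdsGT_zero).const_mul_atTop_of_neg hc
        have h2 := Phi_atBot.comp h1
        have h3 : Tendsto (fun η : ℝ => a j * (Phi ((x k - x j) / η) / Real.sqrt π))
            (nhdsWithin 0 (Set.Ioi 0)) (nhds (a j * (0 / Real.sqrt π))) :=
          tendsto_const_nhds.mul ((h2.comp tendsto_id).div_const _)
        simpa using h3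
  · -- bound
    have h0 : 0 ≤ Phi ((x k - x j) / η) / Real.sqrt π := div_nonneg (Phi_nonneg _) hπ.le
    have h1 : Phi ((x k - x j) / η) / Real.sqrt π ≤ 1 := by
      rw [div_le_one hπ]; exact Phi_le _
    rw [Real.norm_eq_abs, abs_mul, abs_of_nonneg (ha j), abs_of_nonneg h0]
    calc a j * (Phi ((x k - x j) / η) / Real.sqrt π) ≤ a j * 1 := by
          exact mul_le_mul_of_nonneg_left h1 (ha j)
      _ = a j := mul_one _
end
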